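/- Under the hypotheses of the modified Clausius setup (ρ with thermal marginals, energy-conserving unitary U), the quantity S(ρ'_A‖ρ_A) + S(ρ'_B‖ρ_B) equals β_A⟨Q_A⟩ + β_B⟨Q_B⟩ - ΔI(A:B), where S(·‖·) is quantum relative entropy and ρ'_i are the marginals of UρU†. -/

import Mathlib

/-!
The logarithm of a Gibbs state is affine in its Hamiltonian, `log γ = -β H - log Z`. Hence for
every unit-trace `σ` the relative entropy `S(σ‖γ) = Tr σ log σ - Tr σ log γ` splits as
`S(γ) - S(σ) + β Tr((σ - γ) H)`. Applying this to both marginals of `ρ' = U ρ U†` and using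
`S(ρ') = S(ρ)` turns the sum of the two relative entropies into the heat terms minus the change of
mutual information.
-/

open Matrix ComplexOrder Kronecker NormedSpace

/-- Partial trace over the second factor. -/
noncomputable def ptraceB {a b : ℕ} (ρ : Matrix (Fin a × Fin b) (Fin a × Fin b) ℂ) :
    Matrix (Fin a) (Fin a) ℂ :=
  Matrix.of fun i j => ∑ k : Fin b, ρ (i, k) (j, k)

/-- Partial trace over the first factor. -/
noncomputable def ptraceA {a b : ℕ} (ρ : Matrix (Fin a × Fin b) (Fin a × Fin b) ℂ) :
    Matrix (Fin b) (Fin b) ℂ :=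
  Matrix.of fun i j => ∑ k : Fin a, ρ (k, i) (k, j)

/-- The Gibbs (thermal) state `e^{-βH}/Tr e^{-βH}`. -/
noncomputable def gibbs {n : Type*} [Fintype n] [DecidableEq n] (β : ℝ) (Hm : Matrix (n) (n) ℂ) :
    Matrix (n) (n) ℂ :=
  ((NormedSpace.exp ((-β : ℂ) • Hm)).trace)⁻¹ • NormedSpace.exp ((-β : ℂ) • Hm)

/-- Von Neumann entropy `-Tr ρ log ρ`, via the eigenvalues of a Hermitian matrix
(junk value `0` on non-Hermitian input). -/
noncomputable def vnEntropy {n : Type*} [Fintype n] [DecidableEq n] (ρ : Matrix (n) (n) ℂ) : ℝ :=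
  if h : ρ.IsHermitian then -∑ i, (h.eigenvalues i) * Real.log (h.eigenvalues i) else 0

/-- Logarithm of a Hermitian matrix via the spectral theorem
(junk value `0` on non-Hermitian input). -/
noncomputable def hermLog {n : Type*} [Fintype n] [DecidableEq n] (A : Matrix (n) (n) ℂ) :
    Matrix (n) (n) ℂ :=
  if h : A.IsHermitian then
    (Matrix.IsHermitian.eigenvectorUnitary h : Matrix (n) (n) ℂ)
      * Matrix.diagonal (fun i => (Real.log (h.eigenvalues i) : ℂ))
      * star (Matrix.IsHermitian.eigenvectorUnitary h : Matrix (n) (n) ℂ)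
  else 0

/-- Quantum relative entropy `S(σ‖ρ) = Tr{σ log σ − σ log ρ}`. -/
noncomputable def relEntropy {n : Type*} [Fintype n] [DecidableEq n] (σ ρ : Matrix (n) (n) ℂ) : ℝ :=
  (σ * hermLog σ - σ * hermLog ρ).trace.re

/-- Quantum mutual information `I_ρ(A:B) = S(ρ_A) + S(ρ_B) − S(ρ)`. -/
noncomputable def mutualInfo {a b : ℕ} (ρ : Matrix (Fin a × Fin b) (Fin a × Fin b) ℂ) : ℝ :=
  vnEntropy (ptraceB ρ) + vnEntropy (ptraceA ρ) - vnEntropy ρ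

lemma Matrix.nonempty_of_trace_ne_zero {n R : Type*} [Fintype n] [AddCommMonoid R]
    {A : Matrix n n R} (hA : A.trace ≠ 0) : Nonempty n :=
  not_isEmpty_iff.mp fun _ => hA (trace_eq_zero_of_isEmpty A)

section FunctionalCalculus

variable {n 𝕜 : Type*} [RCLike 𝕜] [Fintype n] [DecidableEq n]

lemma Matrix.IsHermitian.trace_cfc {A : Matrix n n 𝕜} (hA : A.IsHermitian) (f : ℝ → ℝ) :
    (cfc f A).trace = ((∑ i, f (hA.eigenvalues i) : ℝ) : 𝕜) := by
  rw [hA.cfc_eq, IsHermitian.cfc, Unitary.conjStarAlgAut_apply, trace_mul_cycle,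
    Unitary.coe_star_mul_self, one_mul, trace_diagonal, RCLike.ofReal_sum]
  rfl

lemma Matrix.IsHermitian.cfc_real_exp {A : Matrix n n 𝕜} (hA : A.IsHermitian) :
    cfc Real.exp A = NormedSpace.exp A := by
  -- `NormedSpace.exp` only depends on the topology, so any matrix norm may be used here.
  let : NormedRing (Matrix n n 𝕜) := Matrix.linftyOpNormedRing
  let : NormedAlgebra ℝ (Matrix n n 𝕜) := Matrix.linftyOpNormedAlgebra
  exact @CFC.real_exp_eq_normedSpace_exp _ _ _ _ IsHermitian.instContinuousFunctionalCalculus _ hA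

lemma Matrix.mul_cfc_log (A : Matrix n n 𝕜) :
    A * cfc Real.log A = cfc (fun x => x * Real.log x) A := by
  by_cases hA : IsSelfAdjoint A
  · calc A * cfc Real.log A = cfc id A * cfc Real.log A := by rw [cfc_id ℝ A]
      _ = cfc (fun x => id x * Real.log x) A :=
        (cfc_mul _ _ A (A.finite_real_spectrum.continuousOn _)
          (A.finite_real_spectrum.continuousOn _)).symm
  · rw [cfc_apply_of_not_predicate A hA, cfc_apply_of_not_predicate A hA, mul_zero]

end FunctionalCalculus

section Entropy

variable {n : Type*} [Fintype n] [DecidableEq n]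

lemma hermLog_eq_cfc (A : Matrix n n ℂ) : hermLog A = cfc Real.log A := by
  by_cases hA : A.IsHermitian
  · rw [hermLog, dif_pos hA, hA.cfc_eq]
    rfl
  · rw [hermLog, dif_neg hA, cfc_apply_of_not_predicate A (show ¬IsSelfAdjoint A from hA)]

lemma vnEntropy_eq_neg_trace_cfc (A : Matrix n n ℂ) :
    vnEntropy A = -(cfc (fun x => x * Real.log x) A).trace.re := by
  by_cases hA : A.IsHermitian
  · rw [vnEntropy, dif_pos hA, hA.trace_cfc]
    rfl
  · rw [vnEntropy, dif_neg hA, cfc_apply_of_not_predicate A (show ¬IsSelfAdjoint A from hA),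
      trace_zero, Complex.zero_re, neg_zero]

lemma vnEntropy_eq_neg_trace_mul_cfc_log (A : Matrix n n ℂ) :
    vnEntropy A = -(A * cfc Real.log A).trace.re := by
  rw [vnEntropy_eq_neg_trace_cfc, mul_cfc_log]

lemma vnEntropy_unitary_mul_mul_conjTranspose {A : Matrix n n ℂ} (hA : A.IsHermitian)
    {U : Matrix n n ℂ} (hU : U ∈ unitary (Matrix n n ℂ)) :
    vnEntropy (U * A * Uᴴ) = vnEntropy A := by
  have hconj := (Unitary.conjStarAlgAut ℝ _ ⟨U, hU⟩).toStarAlgHom.map_cfc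
    (fun x => x * Real.log x) A (A.finite_real_spectrum.continuousOn _)
    ((continuous_const.mul continuous_id).mul continuous_const) hA
  simp only [StarAlgEquiv.toStarAlgHom_apply, Unitary.conjStarAlgAut_apply,
    star_eq_conjTranspose] at hconj
  rw [vnEntropy_eq_neg_trace_cfc, vnEntropy_eq_neg_trace_cfc, ← hconj, trace_mul_cycle,
    ← star_eq_conjTranspose, Unitary.star_mul_self_of_mem hU, one_mul]

end Entropy

namespace Matrix.IsHermitian

variable {n : Type*} [Fintype n] [DecidableEq n] {H : Matrix n n ℂ} (hH : H.IsHermitian)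
  (β : ℝ)

noncomputable def partitionFunction : ℝ := ∑ i, Real.exp (-β * hH.eigenvalues i)

lemma partitionFunction_pos [Nonempty n] : 0 < hH.partitionFunction β :=
  Finset.sum_pos (fun _ _ => Real.exp_pos _) Finset.univ_nonempty

include hH in
lemma exp_neg_smul_eq_cfc :
    NormedSpace.exp ((-β : ℂ) • H) = cfc (fun x => Real.exp (-β * x)) H := by
  rw [← Complex.ofReal_neg, Complex.coe_smul,
    ← ((IsSelfAdjoint.all (-β)).smul hH.isSelfAdjoint).isHermitian.cfc_real_exp,
    ← cfc_comp_smul (-β) Real.exp H Real.continuous_exp.continuousOn hH.isSelfAdjoint]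
  rfl

lemma gibbs_eq_cfc :
    gibbs β H = cfc (fun x => Real.exp (-β * x) / hH.partitionFunction β) H := by
  rw [gibbs, hH.exp_neg_smul_eq_cfc, hH.trace_cfc]
  simp_rw [div_eq_inv_mul]
  rw [cfc_const_mul _ _ H (H.finite_real_spectrum.continuousOn _), partitionFunction,
    ← Complex.coe_smul, Complex.ofReal_inv]
  rfl

include hH in
lemma trace_gibbs [Nonempty n] : (gibbs β H).trace = 1 := by
  rw [hH.gibbs_eq_cfc, hH.trace_cfc, ← Finset.sum_div]
  exact congrArg _ (div_self (hH.partitionFunction_pos β).ne') |>.trans RCLike.ofReal_one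

lemma cfc_log_gibbs [Nonempty n] :
    cfc Real.log (gibbs β H)
      = (-β) • H - algebraMap ℝ _ (Real.log (hH.partitionFunction β)) := by
  have hspec := H.finite_real_spectrum
  rw [hH.gibbs_eq_cfc, ← cfc_comp Real.log _ H hH.isSelfAdjoint
    ((hspec.image _).continuousOn _) (hspec.continuousOn _)]
  have hlog : Real.log ∘ (fun x => Real.exp (-β * x) / hH.partitionFunction β)
      = fun x => -β * x - Real.log (hH.partitionFunction β) := by
    funext x
    rw [Function.comp_apply, Real.log_div (Real.exp_ne_zero _) (hH.partitionFunction_pos β).ne',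
      Real.log_exp]
  rw [hlog, cfc_sub _ _ H (hspec.continuousOn _) (hspec.continuousOn _),
    cfc_const_mul_id _ H hH.isSelfAdjoint, cfc_const _ H hH.isSelfAdjoint]

lemma trace_mul_cfc_log_gibbs [Nonempty n] {τ : Matrix n n ℂ} (hτ : τ.trace = 1) :
    (τ * cfc Real.log (gibbs β H)).trace.re
      = -β * (τ * H).trace.re - Real.log (hH.partitionFunction β) := by
  rw [hH.cfc_log_gibbs, mul_sub, Algebra.algebraMap_eq_smul_one, mul_smul_comm, mul_smul_comm,
    mul_one, trace_sub, trace_smul, trace_smul, hτ]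
  simp

end Matrix.IsHermitian

lemma relEntropy_gibbs {n : Type*} [Fintype n] [DecidableEq n] {H : Matrix n n ℂ}
    (hH : H.IsHermitian) (β : ℝ) {σ : Matrix n n ℂ} (hσ : σ.trace = 1) :
    relEntropy σ (gibbs β H)
      = vnEntropy (gibbs β H) - vnEntropy σ + β * ((σ - gibbs β H) * H).trace.re := by
  have := nonempty_of_trace_ne_zero (hσ ▸ one_ne_zero)
  rw [relEntropy, vnEntropy_eq_neg_trace_mul_cfc_log, vnEntropy_eq_neg_trace_mul_cfc_log,
    hermLog_eq_cfc, hermLog_eq_cfc, trace_sub, Complex.sub_re,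
    hH.trace_mul_cfc_log_gibbs β hσ, hH.trace_mul_cfc_log_gibbs β (hH.trace_gibbs β), sub_mul,
    trace_sub, Complex.sub_re]
  ring

lemma trace_ptraceB {a b : ℕ} (ρ : Matrix (Fin a × Fin b) (Fin a × Fin b) ℂ) :
    (ptraceB ρ).trace = ρ.trace := by
  simp [trace, ptraceB, Fintype.sum_prod_type]

lemma trace_ptraceA {a b : ℕ} (ρ : Matrix (Fin a × Fin b) (Fin a × Fin b) ℂ) :
    (ptraceA ρ).trace = ρ.trace := by
  simp [trace, ptraceA, Fintype.sum_prod_type_right]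

theorem entropy_production_identity_general
    {a b : ℕ} (HA : Matrix (Fin a) (Fin a) ℂ) (HB : Matrix (Fin b) (Fin b) ℂ)
    (hHA : HA.IsHermitian) (hHB : HB.IsHermitian) (βA βB : ℝ)
    (ρ : Matrix (Fin a × Fin b) (Fin a × Fin b) ℂ)
    (hρ : ρ.PosSemidef) (hρ1 : ρ.trace = 1)
    (hmargA : ptraceB ρ = gibbs βA HA) (hmargB : ptraceA ρ = gibbs βB HB)
    (U : Matrix (Fin a × Fin b) (Fin a × Fin b) ℂ)
    (hU : U * Uᴴ = 1 ∧ Uᴴ * U = 1)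
    (ρ' : Matrix (Fin a × Fin b) (Fin a × Fin b) ℂ) (hρ' : ρ' = U * ρ * Uᴴ) :
    relEntropy (ptraceB ρ') (ptraceB ρ) + relEntropy (ptraceA ρ') (ptraceA ρ)
      = βA * ((ptraceB ρ' - ptraceB ρ) * HA).trace.re
        + βB * ((ptraceA ρ' - ptraceA ρ) * HB).trace.re
        - (mutualInfo ρ' - mutualInfo ρ) := by
  have hρ'1 : ρ'.trace = 1 := by rw [hρ', trace_mul_cycle, hU.2, one_mul, hρ1]
  have hS : vnEntropy ρ' = vnEntropy ρ :=
    hρ' ▸ vnEntropy_unitary_mul_mul_conjTranspose hρ.isHermitian ⟨hU.2, hU.1⟩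
  rw [mutualInfo, mutualInfo, hmargA, hmargB,
    relEntropy_gibbs hHA βA (by rw [trace_ptraceB, hρ'1]),
    relEntropy_gibbs hHB βB (by rw [trace_ptraceA, hρ'1]), hS]
  ring

/-- Entropy-production identity: under the modified Clausius setup,
`S(ρ'_A‖ρ_A) + S(ρ'_B‖ρ_B) = β_A⟨Q_A⟩ + β_B⟨Q_B⟩ − ΔI(A:B)`. -/
theorem entropy_production_identity
    {a b : ℕ} (HA : Matrix (Fin a) (Fin a) ℂ) (HB : Matrix (Fin b) (Fin b) ℂ)
    (hHA : HA.IsHermitian) (hHB : HB.IsHermitian) (βA βB : ℝ)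
    (ρ : Matrix (Fin a × Fin b) (Fin a × Fin b) ℂ)
    (hρ : ρ.PosSemidef) (hρ1 : ρ.trace = 1)
    (hmargA : ptraceB ρ = gibbs βA HA) (hmargB : ptraceA ρ = gibbs βB HB)
    (U : Matrix (Fin a × Fin b) (Fin a × Fin b) ℂ)
    (hU : U * Uᴴ = 1 ∧ Uᴴ * U = 1)
    (hcomm : U * (HA ⊗ₖ (1 : Matrix (Fin b) (Fin b) ℂ)
          + (1 : Matrix (Fin a) (Fin a) ℂ) ⊗ₖ HB)
        = (HA ⊗ₖ (1 : Matrix (Fin b) (Fin b) ℂ)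
          + (1 : Matrix (Fin a) (Fin a) ℂ) ⊗ₖ HB) * U)
    (ρ' : Matrix (Fin a × Fin b) (Fin a × Fin b) ℂ) (hρ' : ρ' = U * ρ * Uᴴ) :
    relEntropy (ptraceB ρ') (ptraceB ρ) + relEntropy (ptraceA ρ') (ptraceA ρ)
      = βA * ((ptraceB ρ' - ptraceB ρ) * HA).trace.re
        + βB * ((ptraceA ρ' - ptraceA ρ) * HB).trace.re
        - (mutualInfo ρ' - mutualInfo ρ) :=
  entropy_production_identity_general HA HB hHA hHB βA βB ρ hρ hρ1 hmargA hmargB U hU ρ' hρ'
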